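/- A ring R is right Central McCoy if and only if the ring D₂(R) = {[[a, b],[0, a]] : a, b ∈ R} of 2×2 upper triangular matrices with constant diagonal is right Central McCoy. -/

import Mathlib

def IsRightCentralMcCoy (R : Type*) [Ring R] : Prop :=
  ∀ f g : Polynomial R, f ≠ 0 → g ≠ 0 → f * g = 0 →
    ∃ r : R, r ≠ 0 ∧ ∀ i : ℕ, f.coeff i * r ∈ Set.center R

/-- The subring `D₂(R)` of `2 × 2` upper triangular matrices with constant
main diagonal, i.e. matrices `[[a, b], [0, a]]`. -/
def D2 (R : Type*) [Ring R] : Subring (Matrix (Fin 2) (Fin 2) R) where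
  carrier := {M | M 1 0 = 0 ∧ M 0 0 = M 1 1}
  zero_mem' := ⟨rfl, rfl⟩
  one_mem' := ⟨rfl, rfl⟩
  add_mem' := by
    rintro a b ⟨ha1, ha2⟩ ⟨hb1, hb2⟩
    constructor <;> simp [Matrix.add_apply, ha1, hb1, ha2, hb2]
  neg_mem' := by
    rintro a ⟨ha1, ha2⟩
    constructor <;> simp [Matrix.neg_apply, ha1, ha2]
  mul_mem' := by
    rintro a b ⟨ha1, ha2⟩ ⟨hb1, hb2⟩
    constructor <;> simp [Matrix.mul_apply, Fin.sum_univ_two, ha1, hb1, ha2, hb2]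


/-!
`D₂(R)` is the ring of dual numbers `R[ε]`, `ε² = 0`, with `[[a, b], [0, a]] = a + bε`.
A product `FG = 0` in `D₂(R)[x]` splits into `f g = 0` and `f g' + f' g = 0` in `R[x]`, where
`f, f'` are the polynomials of diagonal and of off-diagonal entries of `F`. So if `f ≠ 0` then `f`
is killed by the nonzero polynomial `g` or, when `g = 0`, by `g'`; the resulting `r` with every
`aᵢ r` central gives the central products `Fᵢ · rε = (aᵢ r)ε` (for `f = 0` take `r = 1`).
Conversely `R[x]` embeds in `D₂(R)[x]`, and a witness `a + bε` for the embedded product yields the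
witness `a`, or `b` if `a = 0`.
-/

namespace D2

variable {R : Type*} [Ring R]

theorem apply_one_zero (M : D2 R) : (M : Matrix (Fin 2) (Fin 2) R) 1 0 = 0 := M.2.1

theorem apply_one_one (M : D2 R) :
    (M : Matrix (Fin 2) (Fin 2) R) 1 1 = (M : Matrix (Fin 2) (Fin 2) R) 0 0 := M.2.2.symm

def diag : D2 R →+* R where
  toFun M := (M : Matrix (Fin 2) (Fin 2) R) 0 0
  map_one' := rfl
  map_mul' M N := by
    change ((M : Matrix (Fin 2) (Fin 2) R) * N) 0 0 = _
    rw [Matrix.mul_apply, Fin.sum_univ_two, apply_one_zero N, mul_zero, add_zero]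
  map_zero' := rfl
  map_add' _ _ := rfl

def offDiag : D2 R →+ R where
  toFun M := (M : Matrix (Fin 2) (Fin 2) R) 0 1
  map_zero' := rfl
  map_add' _ _ := rfl

theorem offDiag_mul (M N : D2 R) : offDiag (M * N) = diag M * offDiag N + offDiag M * diag N := by
  change ((M : Matrix (Fin 2) (Fin 2) R) * N) 0 1 = _
  rw [Matrix.mul_apply, Fin.sum_univ_two, apply_one_one N]
  rfl

@[ext]
theorem ext {M N : D2 R} (h₀ : diag M = diag N) (h₁ : offDiag M = offDiag N) : M = N := by
  have h₂ := (apply_one_one M).trans (h₀.trans (apply_one_one N).symm)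
  ext i j
  fin_cases i <;> fin_cases j
  exacts [h₀, h₁, (apply_one_zero M).trans (apply_one_zero N).symm, h₂]

def scalar : R →+* D2 R :=
  (Matrix.scalar (Fin 2)).codRestrict (D2 R) fun _ => ⟨rfl, rfl⟩

@[simp] theorem diag_scalar (a : R) : diag (scalar a) = a := rfl

@[simp] theorem offDiag_scalar (a : R) : offDiag (scalar a) = 0 := rfl

theorem scalar_injective : Function.Injective (scalar : R → D2 R) :=
  Function.LeftInverse.injective diag_scalar

def ofOffDiag (r : R) : D2 R := ⟨!![0, r; 0, 0], ⟨rfl, rfl⟩⟩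

@[simp] theorem diag_ofOffDiag (r : R) : diag (ofOffDiag r) = 0 := rfl

@[simp] theorem offDiag_ofOffDiag (r : R) : offDiag (ofOffDiag r) = r := rfl

theorem ofOffDiag_ne_zero {r : R} (hr : r ≠ 0) : ofOffDiag r ≠ 0 :=
  fun h => hr (congrArg offDiag h)

theorem mul_ofOffDiag (M : D2 R) (r : R) : M * ofOffDiag r = ofOffDiag (diag M * r) := by
  ext <;> simp [offDiag_mul]

theorem ofOffDiag_mul (r : R) (M : D2 R) : ofOffDiag r * M = ofOffDiag (r * diag M) := by
  ext <;> simp [offDiag_mul]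

theorem ofOffDiag_mem_center {r : R} (hr : r ∈ Set.center R) : ofOffDiag r ∈ Set.center (D2 R) := by
  rw [Semigroup.mem_center_iff] at hr ⊢
  intro M
  rw [mul_ofOffDiag, ofOffDiag_mul, hr]

theorem diag_mem_center {M : D2 R} (hM : M ∈ Set.center (D2 R)) : diag M ∈ Set.center R := by
  rw [Semigroup.mem_center_iff] at hM ⊢
  intro c
  simpa using congrArg diag (hM (scalar c))

theorem offDiag_mem_center {M : D2 R} (hM : M ∈ Set.center (D2 R)) :
    offDiag M ∈ Set.center R := by
  rw [Semigroup.mem_center_iff] at hM ⊢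
  intro c
  simpa [offDiag_mul] using congrArg offDiag (hM (scalar c))

noncomputable def offDiagPoly (F : Polynomial (D2 R)) : Polynomial R :=
  ⟨AddMonoidAlgebra.ofCoeff (F.toFinsupp.coeff.mapRange offDiag (map_zero _))⟩

@[simp] theorem coeff_offDiagPoly (F : Polynomial (D2 R)) (n : ℕ) :
    (offDiagPoly F).coeff n = offDiag (F.coeff n) := by
  rcases F with ⟨F⟩
  rfl

@[simp] theorem offDiagPoly_zero : offDiagPoly (0 : Polynomial (D2 R)) = 0 := by
  ext
  simp

theorem offDiagPoly_mul (F G : Polynomial (D2 R)) :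
    offDiagPoly (F * G) = F.map diag * offDiagPoly G + offDiagPoly F * G.map diag := by
  ext n
  simp only [coeff_offDiagPoly, Polynomial.coeff_add, Polynomial.coeff_mul, map_sum, offDiag_mul,
    Polynomial.coeff_map, Finset.sum_add_distrib]

theorem eq_zero_of_map_diag_eq_zero_of_offDiagPoly_eq_zero {F : Polynomial (D2 R)}
    (h₀ : F.map diag = 0) (h₁ : offDiagPoly F = 0) : F = 0 := by
  ext n : 1
  ext
  · simpa using congrArg (Polynomial.coeff · n) h₀
  · simpa using congrArg (Polynomial.coeff · n) h₁

end D2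

namespace IsRightCentralMcCoy

open D2

variable {R : Type*} [Ring R]

theorem exists_diag_mul_mem_center (hR : IsRightCentralMcCoy R)
    {F G : Polynomial (D2 R)} (hF : F ≠ 0) (hG : G ≠ 0) (hFG : F * G = 0) :
    ∃ r : R, r ≠ 0 ∧ ∀ i, diag (F.coeff i) * r ∈ Set.center R := by
  by_cases hf : F.map diag = 0
  · have : Nontrivial R := by
      by_contra h
      rw [not_nontrivial_iff_subsingleton] at h
      exact hF (eq_zero_of_map_diag_eq_zero_of_offDiagPoly_eq_zero hf (Subsingleton.elim _ _))
    refine ⟨1, one_ne_zero, fun i => ?_⟩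
    rw [← Polynomial.coeff_map, hf, Polynomial.coeff_zero, zero_mul]
    exact Set.zero_mem_center
  simp_rw [← Polynomial.coeff_map]
  by_cases hg : G.map diag = 0
  · have hg' : offDiagPoly G ≠ 0 := fun h =>
      hG (eq_zero_of_map_diag_eq_zero_of_offDiagPoly_eq_zero hg h)
    refine hR _ _ hf hg' ?_
    simpa [hg, hFG] using (offDiagPoly_mul F G).symm
  · exact hR _ _ hf hg (by rw [← Polynomial.map_mul, hFG, Polynomial.map_zero])

theorem d2 (hR : IsRightCentralMcCoy R) : IsRightCentralMcCoy (D2 R) := by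
  intro F G hF hG hFG
  obtain ⟨r, hr, hc⟩ := exists_diag_mul_mem_center hR hF hG hFG
  refine ⟨ofOffDiag r, ofOffDiag_ne_zero hr, fun i => ?_⟩
  rw [mul_ofOffDiag]
  exact ofOffDiag_mem_center (hc i)

theorem of_d2 (hD : IsRightCentralMcCoy (D2 R)) : IsRightCentralMcCoy R := by
  intro f g hf hg hfg
  have map_ne_zero {p : Polynomial R} : p ≠ 0 → p.map scalar ≠ 0 :=
    (Polynomial.map_ne_zero_iff scalar_injective).mpr
  obtain ⟨M, hM, hc⟩ := hD (f.map scalar) (g.map scalar) (map_ne_zero hf) (map_ne_zero hg)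
    (by rw [← Polynomial.map_mul, hfg, Polynomial.map_zero])
  simp only [Polynomial.coeff_map] at hc
  by_cases hd : diag M = 0
  · refine ⟨offDiag M, fun h => hM (D2.ext (by simpa using hd) (by simpa using h)), fun i => ?_⟩
    simpa [offDiag_mul] using offDiag_mem_center (hc i)
  · exact ⟨diag M, hd, fun i => by simpa using diag_mem_center (hc i)⟩

end IsRightCentralMcCoy

theorem isRightCentralMcCoy_iff_D2 (R : Type*) [Ring R] :
    IsRightCentralMcCoy R ↔ IsRightCentralMcCoy (D2 R) :=
  ⟨IsRightCentralMcCoy.d2, IsRightCentralMcCoy.of_d2⟩
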